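/- arXiv:1901.09993 — 2 statements merged into one kernel-verified Lean document; each statement's English description precedes it below -/
import Mathlib

section
/- If λ_m is the largest eigenvalue of the symmetrically normalized Laplacian L_s = D^{-1/2}(D - A)D^{-1/2} of a positively weighted undirected graph, then the largest eigenvalue of the renormalized Laplacian L̃_s = (D+I)^{-1/2}((D+I) - (A+I))(D+I)^{-1/2} is at most (d_m/(d_m+1))·λ_m, where d_m is the maximum vertex degree. -/
/-!
The self-loops cancel in `D̃ - Ã = D - A`, so with `S = diag √(dᵢ/(dᵢ+1))` we have
`L̃_s = S L_s S`. For an eigenvector `x` of `L̃_s`, the Rayleigh bound for `L_s` gives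
`μ ‖x‖² = ⟪Sx, L_s Sx⟫ ≤ λ_m ‖Sx‖² ≤ λ_m · d_m/(d_m+1) · ‖x‖²`, the last step because
`t ↦ t/(t+1)` is increasing and `λ_m ≥ 0`: the vector `D^{1/2} 𝟙` lies in the kernel of `L_s`.
-/

open Matrix BigOperators

/-- `D^{-1/2}` for the diagonal of a positive vector `d`. -/
noncomputable def invSqrtDiag {ι : Type*} [Fintype ι] [DecidableEq ι] (d : ι → ℝ) :
    Matrix ι ι ℝ :=
  Matrix.diagonal fun i => (Real.sqrt (d i))⁻¹

/-- `μ` is an eigenvalue of the real matrix `M`. -/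
def IsEigenvalue {ι : Type*} [Fintype ι] (M : Matrix ι ι ℝ) (μ : ℝ) : Prop :=
  ∃ v : ι → ℝ, v ≠ 0 ∧ M.mulVec v = μ • v

lemma IsEigenvalue.of_smul_one_sub {ι : Type*} [Fintype ι] [DecidableEq ι]
    {M : Matrix ι ι ℝ} {c ν : ℝ} (h : IsEigenvalue (c • 1 - M) ν) : IsEigenvalue M (c - ν) := by
  obtain ⟨v, hv, hMv⟩ := h
  refine ⟨v, hv, ?_⟩
  rw [sub_mulVec, smul_mulVec, one_mulVec] at hMv
  rw [sub_smul, ← hMv, sub_sub_cancel]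

lemma Matrix.IsHermitian.isEigenvalue_eigenvalues {ι : Type*} [Fintype ι] [DecidableEq ι]
    {M : Matrix ι ι ℝ} (hM : M.IsHermitian) (i : ι) : IsEigenvalue M (hM.eigenvalues i) :=
  ⟨⇑(hM.eigenvectorBasis i), fun h => hM.eigenvectorBasis.orthonormal.ne_zero i
    (by ext k; exact congrFun h k), hM.mulVec_eigenvectorBasis i⟩

lemma Matrix.IsHermitian.dotProduct_mulVec_le_of_isEigenvalue_le {ι : Type*} [Fintype ι]
    [DecidableEq ι] {M : Matrix ι ι ℝ} (hM : M.IsHermitian) {c : ℝ}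
    (hc : ∀ ν, IsEigenvalue M ν → ν ≤ c) (x : ι → ℝ) : x ⬝ᵥ M *ᵥ x ≤ c * (x ⬝ᵥ x) := by
  have hN : (c • 1 - M).IsHermitian := (isHermitian_one.smul (.all c)).sub hM
  have hpsd : (c • 1 - M).PosSemidef := hN.posSemidef_iff_eigenvalues_nonneg.mpr fun i =>
    (sub_le_self_iff _).mp <| hc _ (hN.isEigenvalue_eigenvalues i).of_smul_one_sub
  have := hpsd.dotProduct_mulVec_nonneg x
  rw [star_trivial, sub_mulVec, smul_mulVec, one_mulVec, dotProduct_sub, dotProduct_smul,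
    smul_eq_mul] at this
  linarith

noncomputable def normalizedLaplacian {ι : Type*} [Fintype ι] [DecidableEq ι]
    (A : Matrix ι ι ℝ) (d : ι → ℝ) : Matrix ι ι ℝ :=
  invSqrtDiag d * (diagonal d - A) * invSqrtDiag d

lemma diagonal_add_one_sub_add_one {ι : Type*} [DecidableEq ι] (A : Matrix ι ι ℝ) (d : ι → ℝ) :
    diagonal (fun i => d i + 1) - (A + 1) = diagonal d - A := by
  rw [← diagonal_add, diagonal_one]
  abel

section NormalizedLaplacian

variable {ι : Type*} [Fintype ι] [DecidableEq ι] {A : Matrix ι ι ℝ} {d : ι → ℝ}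

lemma dotProduct_diagonal_mul_mul_diagonal_mulVec (g : ι → ℝ) (M : Matrix ι ι ℝ) (x : ι → ℝ) :
    x ⬝ᵥ (diagonal g * M * diagonal g) *ᵥ x =
      (diagonal g *ᵥ x) ⬝ᵥ M *ᵥ (diagonal g *ᵥ x) := by
  rw [← mulVec_mulVec, ← mulVec_mulVec, dotProduct_mulVec]
  congr 1
  ext i
  rw [vecMul_diagonal, mulVec_diagonal, mul_comm]

lemma dotProduct_self_diagonal_sqrt_mulVec_le {w : ι → ℝ} {c : ℝ} (hw₀ : ∀ i, 0 ≤ w i)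
    (hwc : ∀ i, w i ≤ c) (x : ι → ℝ) :
    (diagonal (fun i => √(w i)) *ᵥ x) ⬝ᵥ (diagonal (fun i => √(w i)) *ᵥ x) ≤
      c * (x ⬝ᵥ x) := by
  simp only [dotProduct, mulVec_diagonal, Finset.mul_sum]
  refine Finset.sum_le_sum fun i _ => ?_
  calc √(w i) * x i * (√(w i) * x i) = w i * (x i * x i) := by
        rw [mul_mul_mul_comm, Real.mul_self_sqrt (hw₀ i)]
    _ ≤ c * (x i * x i) := mul_le_mul_of_nonneg_right (hwc i) (mul_self_nonneg _)

lemma invSqrtDiag_eq_diagonal_mul (hd : ∀ i, 0 < d i) (e : ι → ℝ) :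
    invSqrtDiag e = diagonal (fun i => √(d i / e i)) * invSqrtDiag d := by
  rw [invSqrtDiag, invSqrtDiag, diagonal_mul_diagonal]
  congr 1
  funext i
  rw [Real.sqrt_div (hd i).le, div_mul_eq_mul_div, mul_inv_cancel₀ (Real.sqrt_pos.2 (hd i)).ne',
    one_div]

lemma normalizedLaplacian_add_one (hd : ∀ i, 0 < d i) :
    normalizedLaplacian (A + 1) (fun i => d i + 1) =
      diagonal (fun i => √(d i / (d i + 1))) * normalizedLaplacian A d *
        diagonal (fun i => √(d i / (d i + 1))) := by
  rw [normalizedLaplacian, normalizedLaplacian, diagonal_add_one_sub_add_one,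
    invSqrtDiag_eq_diagonal_mul hd]
  simp only [mul_assoc]
  congr 3
  exact (commute_diagonal _ _).eq

lemma normalizedLaplacian_isHermitian (hA : A.IsSymm) (d : ι → ℝ) :
    (normalizedLaplacian A d).IsHermitian := by
  have hL : (diagonal d - A).IsHermitian := (isHermitian_diagonal d).sub hA
  have hD : (invSqrtDiag d)ᴴ = invSqrtDiag d := (isHermitian_diagonal _).eq
  have h := isHermitian_conjTranspose_mul_mul (invSqrtDiag d) hL
  rwa [hD] at h

lemma laplacian_mulVec_one (hd : ∀ i, d i = ∑ j, A i j) : (diagonal d - A) *ᵥ 1 = 0 := by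
  rw [sub_mulVec, sub_eq_zero]
  ext i
  rw [mulVec_diagonal, Pi.one_apply, mul_one, hd i]
  simp [mulVec, dotProduct]

lemma normalizedLaplacian_mulVec_sqrt (hd : ∀ i, d i = ∑ j, A i j) (hdpos : ∀ i, 0 < d i) :
    normalizedLaplacian A d *ᵥ (fun i => √(d i)) = 0 := by
  have h : invSqrtDiag d *ᵥ (fun i => √(d i)) = 1 := by
    ext i
    simp [invSqrtDiag, mulVec_diagonal, (Real.sqrt_pos.2 (hdpos i)).ne']
  rw [normalizedLaplacian, ← mulVec_mulVec, h, ← mulVec_mulVec, laplacian_mulVec_one hd,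
    mulVec_zero]

lemma isEigenvalue_zero_normalizedLaplacian [Nonempty ι] (hd : ∀ i, d i = ∑ j, A i j)
    (hdpos : ∀ i, 0 < d i) : IsEigenvalue (normalizedLaplacian A d) 0 := by
  obtain ⟨i⟩ := ‹Nonempty ι›
  refine ⟨fun j => √(d j), fun h => (Real.sqrt_pos.2 (hdpos i)).ne' (congrFun h i), ?_⟩
  rw [normalizedLaplacian_mulVec_sqrt hd hdpos, zero_smul]

end NormalizedLaplacian

theorem renormalized_laplacian_eigenvalue_bound_general
    {n : ℕ} (A : Matrix (Fin n) (Fin n) ℝ)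
    (hAsymm : A.IsSymm)
    (d : Fin n → ℝ) (hd : ∀ i, d i = ∑ j, A i j) (hdpos : ∀ i, 0 < d i)
    (dm : ℝ) (hdm : IsGreatest (Set.range d) dm)
    (lamm : ℝ)
    (hlam : IsGreatest
      {μ | IsEigenvalue (invSqrtDiag d * (Matrix.diagonal d - A) * invSqrtDiag d) μ} lamm)
    (μ : ℝ)
    (hμ : IsEigenvalue
      (invSqrtDiag (fun i => d i + 1) *
        (Matrix.diagonal (fun i => d i + 1) - (A + 1)) *
        invSqrtDiag (fun i => d i + 1)) μ) :
    μ ≤ dm / (dm + 1) * lamm := by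
  obtain ⟨⟨i₀, -⟩, hdm_ub⟩ := hdm
  have : Nonempty (Fin n) := ⟨i₀⟩
  have hlam_nonneg : 0 ≤ lamm := hlam.2 (isEigenvalue_zero_normalizedLaplacian hd hdpos)
  have hweight_nonneg : ∀ i, 0 ≤ d i / (d i + 1) := fun i => by
    have := hdpos i
    positivity
  have hweight : ∀ i, d i / (d i + 1) ≤ dm / (dm + 1) := fun i => by
    have hi : d i ≤ dm := hdm_ub ⟨i, rfl⟩
    have := hdpos i
    rw [div_le_div_iff₀ (by linarith) (by linarith)]
    linarith
  obtain ⟨x, hx, hμx⟩ := hμ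
  set S := diagonal fun i => √(d i / (d i + 1))
  have hx_pos : 0 < x ⬝ᵥ x := by simpa using dotProduct_star_self_pos_iff.2 hx
  refine le_of_mul_le_mul_right ?_ hx_pos
  calc μ * (x ⬝ᵥ x) = (S *ᵥ x) ⬝ᵥ normalizedLaplacian A d *ᵥ (S *ᵥ x) := by
        rw [← dotProduct_diagonal_mul_mul_diagonal_mulVec, ← normalizedLaplacian_add_one hdpos,
          normalizedLaplacian, hμx, dotProduct_smul, smul_eq_mul]
    _ ≤ lamm * ((S *ᵥ x) ⬝ᵥ (S *ᵥ x)) :=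
      (normalizedLaplacian_isHermitian hAsymm d).dotProduct_mulVec_le_of_isEigenvalue_le
        (fun _ hν => hlam.2 hν) _
    _ ≤ lamm * (dm / (dm + 1) * (x ⬝ᵥ x)) := by
      gcongr
      exact dotProduct_self_diagonal_sqrt_mulVec_le hweight_nonneg hweight x
    _ = dm / (dm + 1) * lamm * (x ⬝ᵥ x) := by ring

/-- If `λm` is the largest eigenvalue of the symmetrically normalized Laplacian
`L_s = D^{-1/2}(D-A)D^{-1/2}` of a positively weighted undirected graph, then every
eigenvalue of the renormalized Laplacian `(D+I)^{-1/2}((D+I)-(A+I))(D+I)^{-1/2}` is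
at most `(d_m/(d_m+1)) * λm`. -/
theorem renormalized_laplacian_eigenvalue_bound
    {n : ℕ} (hn : 0 < n) (A : Matrix (Fin n) (Fin n) ℝ)
    (hAsymm : A.IsSymm) (hAnonneg : ∀ i j, 0 ≤ A i j)
    (d : Fin n → ℝ) (hd : ∀ i, d i = ∑ j, A i j) (hdpos : ∀ i, 0 < d i)
    (dm : ℝ) (hdm : IsGreatest (Set.range d) dm)
    (lamm : ℝ)
    (hlam : IsGreatest
      {μ | IsEigenvalue (invSqrtDiag d * (Matrix.diagonal d - A) * invSqrtDiag d) μ} lamm)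
    (μ : ℝ)
    (hμ : IsEigenvalue
      (invSqrtDiag (fun i => d i + 1) *
        (Matrix.diagonal (fun i => d i + 1) - (A + 1)) *
        invSqrtDiag (fun i => d i + 1)) μ) :
    μ ≤ dm / (dm + 1) * lamm :=
  renormalized_laplacian_eigenvalue_bound_general A hAsymm d hd hdpos dm hdm lamm hlam μ hμ
end

section
/- All eigenvalues of the renormalized Laplacian L̃_s = (D+I)^{-1/2}((D+I)-(A+I))(D+I)^{-1/2} lie in [0, 2·d_m/(d_m+1)], which is a strict subinterval of [0,2]; in particular adding self-loops strictly compresses the a priori eigenvalue range of the normalized Laplacian. -/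
open Matrix BigOperators

/-- All eigenvalues of the renormalized Laplacian lie in `[0, 2 d_m/(d_m+1)]`, a strict
subinterval of `[0, 2]`: adding self-loops strictly compresses the eigenvalue range. -/
theorem renormalized_laplacian_eigenvalues_compressed
    {n : ℕ} (hn : 0 < n) (A : Matrix (Fin n) (Fin n) ℝ)
    (hAsymm : A.IsSymm) (hAnonneg : ∀ i j, 0 ≤ A i j)
    (d : Fin n → ℝ) (hd : ∀ i, d i = ∑ j, A i j) (hdpos : ∀ i, 0 < d i)
    (dm : ℝ) (hdm : IsGreatest (Set.range d) dm)
    (Lt : Matrix (Fin n) (Fin n) ℝ)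
    (hLt : Lt = invSqrtDiag (fun i => d i + 1) *
      (Matrix.diagonal (fun i => d i + 1) - (A + 1)) * invSqrtDiag (fun i => d i + 1)) :
    (∀ μ : ℝ, IsEigenvalue Lt μ → μ ∈ Set.Icc (0 : ℝ) (2 * dm / (dm + 1))) ∧
      2 * dm / (dm + 1) < 2 := by
  -- basic facts about dm
  obtain ⟨⟨i0, hi0⟩, hdub⟩ := hdm
  have hdmpos : 0 < dm := hi0 ▸ hdpos i0
  have hdm1 : (0:ℝ) < dm + 1 := by linarith
  have hdle : ∀ i, d i ≤ dm := fun i => hdub ⟨i, rfl⟩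
  have hsym : ∀ i j, A i j = A j i := by
    intro i j
    have := congrFun (congrFun hAsymm i) j
    simpa [Matrix.transpose_apply] using this.symm
  constructor
  · rintro μ ⟨v, hv0, hveq⟩
    have hd1pos : ∀ i, (0:ℝ) < d i + 1 := fun i => by linarith [hdpos i]
    set s : Fin n → ℝ := fun i => Real.sqrt (d i + 1) with hs
    have hspos : ∀ i, 0 < s i := fun i => Real.sqrt_pos.2 (hd1pos i)
    have hsq : ∀ i, s i ^ 2 = d i + 1 := fun i => Real.sq_sqrt (hd1pos i).le
    set w : Fin n → ℝ := fun i => v i * (s i)⁻¹ with hw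
    have hwdef : ∀ i, w i = v i * (s i)⁻¹ := fun i => rfl
    have hw2 : ∀ i, (d i + 1) * (w i) ^ 2 = (v i) ^ 2 := by
      intro i
      have h1 := hsq i
      have h2 := (hspos i).ne'
      rw [hwdef, mul_pow, inv_pow, h1]
      rw [mul_comm (d i + 1), mul_assoc, inv_mul_cancel₀ (hd1pos i).ne', mul_one]
    -- entries of Lt
    have hLt' : ∀ i j, Lt i j = (s i)⁻¹ * ((if i = j then d i else 0) - A i j) * (s j)⁻¹ := by
      intro i j
      rw [hLt]
      simp only [invSqrtDiag, Matrix.mul_diagonal, Matrix.diagonal_mul, Matrix.sub_apply,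
        Matrix.add_apply, Matrix.diagonal_apply, Matrix.one_apply, hs]
      split_ifs <;> ring
    -- the quadratic form
    set P : ℝ := ∑ i, (v i) ^ 2 with hP
    set T : ℝ := ∑ i, d i * (w i) ^ 2 with hT
    set S : ℝ := ∑ i, ∑ j, A i j * (w i * w j) with hS
    have hPpos : 0 < P := by
      obtain ⟨i, hi⟩ := Function.ne_iff.1 hv0
      refine Finset.sum_pos' (fun i _ => sq_nonneg _) ⟨i, Finset.mem_univ i, ?_⟩
      exact pow_pos (abs_pos.2 hi) 2 |>.trans_le (by rw [sq_abs])
    have key : μ * P = T - S := by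
      have h1 : v ⬝ᵥ (Lt *ᵥ v) = μ * P := by
        rw [hveq]
        simp only [dotProduct, Pi.smul_apply, smul_eq_mul, hP, Finset.mul_sum]
        exact Finset.sum_congr rfl fun i _ => by ring
      have h2 : v ⬝ᵥ (Lt *ᵥ v)
          = ∑ i, ∑ j, ((if i = j then d i else 0) * (w i * w j) - A i j * (w i * w j)) := by
        simp only [dotProduct, Matrix.mulVec, Finset.mul_sum]
        refine Finset.sum_congr rfl fun i _ => Finset.sum_congr rfl fun j _ => ?_
        rw [hLt' i j, hwdef i, hwdef j]
        ring
      rw [← h1, h2]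
      simp only [Finset.sum_sub_distrib]
      rw [hS, hT]
      congr 1
      refine Finset.sum_congr rfl fun i _ => ?_
      simp only [ite_mul, zero_mul, Finset.sum_ite_eq, Finset.mem_univ, if_true]
      ring
    -- the comparison sum equals T
    have hrow : ∀ i, ∑ j, A i j * (w i) ^ 2 = d i * (w i) ^ 2 := by
      intro i; rw [← Finset.sum_mul, ← hd i]
    have hcol : ∑ i, ∑ j, A i j * (w j) ^ 2 = T := by
      rw [Finset.sum_comm, hT]
      refine Finset.sum_congr rfl fun j _ => ?_
      rw [← Finset.sum_mul]
      congr 1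
      rw [hd j]
      exact Finset.sum_congr rfl fun i _ => hsym i j
    have hM : ∑ i, ∑ j, A i j * (((w i) ^ 2 + (w j) ^ 2) / 2) = T := by
      have hsplit : ∀ i j, A i j * (((w i) ^ 2 + (w j) ^ 2) / 2)
          = A i j * (w i) ^ 2 / 2 + A i j * (w j) ^ 2 / 2 := fun i j => by ring
      simp only [hsplit, Finset.sum_add_distrib]
      have e1 : ∑ i, ∑ j, A i j * (w i) ^ 2 / 2 = T / 2 := by
        rw [hT, Finset.sum_div]
        refine Finset.sum_congr rfl fun i _ => ?_
        rw [← hrow i, Finset.sum_div]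
      have e2 : ∑ i, ∑ j, A i j * (w j) ^ 2 / 2 = T / 2 := by
        rw [← hcol, Finset.sum_div]
        refine Finset.sum_congr rfl fun i _ => ?_
        rw [Finset.sum_div]
      rw [e1, e2]; ring
    -- S is between -T and T
    have hSleT : S ≤ T := by
      rw [hS, ← hM]
      refine Finset.sum_le_sum fun i _ => Finset.sum_le_sum fun j _ => ?_
      exact mul_le_mul_of_nonneg_left (by nlinarith [sq_nonneg (w i - w j)]) (hAnonneg i j)
    have hnegT : 0 ≤ S + T := by
      have hrw : S + T = ∑ i, ∑ j,
          (A i j * (w i * w j) + A i j * (((w i) ^ 2 + (w j) ^ 2) / 2)) := by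
        rw [hS, ← hM, ← Finset.sum_add_distrib]
        exact Finset.sum_congr rfl fun i _ => (Finset.sum_add_distrib).symm
      rw [hrw]
      refine Finset.sum_nonneg fun i _ => Finset.sum_nonneg fun j _ => ?_
      nlinarith [mul_nonneg (hAnonneg i j) (sq_nonneg (w i + w j))]
    have hTnonneg : 0 ≤ T := by
      rw [hT]
      exact Finset.sum_nonneg fun i _ => mul_nonneg (hdpos i).le (sq_nonneg _)
    have hTle : T ≤ dm / (dm + 1) * P := by
      rw [hT, hP, Finset.mul_sum]
      refine Finset.sum_le_sum fun i _ => ?_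
      rw [div_mul_eq_mul_div, le_div_iff₀ hdm1]
      nlinarith [hw2 i, mul_nonneg (sub_nonneg.2 (hdle i)) (sq_nonneg (w i))]
    constructor
    · by_contra h
      push_neg at h
      nlinarith
    · by_contra h
      push_neg at h
      have h2T : μ * P ≤ 2 * (dm / (dm + 1) * P) := by nlinarith
      have : 2 * (dm / (dm + 1) * P) = (2 * dm / (dm + 1)) * P := by ring
      nlinarith
  · rw [div_lt_iff₀ hdm1]; linarith
end
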